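/- arXiv:1409.6527 — 3 statements merged into one kernel-verified Lean document; each statement's English description precedes it below -/
import Mathlib

section
/- In Z[i], the set T = {x + iy : x > 0, y > 0} has density 1/8 with respect to the Z-basis E' = {1, −1+i}: indeed |O[B,E'] ∩ T| = (B−1)(B−2)/2 for all B ≥ 2. In particular, the density of a subset of the ring of integers can depend on the chosen Z-basis. -/
/-!
In the coordinates `(y, x)` of `z = x·1 + y·(-1+i)`, the points of the box lying in the open
first quadrant are exactly the pairs `0 < y < x < B`, i.e. the 2-element subsets of
`{1, …, B-1}`; there are `(B-1).choose 2 = (B-1)(B-2)/2` of them, and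
`(B-1)(B-2)/2 / (2B)² → 1/8`.
-/

open Filter Topology

def gaussianBox' (B : ℤ) : Set GaussianInt :=
  {z : GaussianInt | (-B ≤ z.re + z.im ∧ z.re + z.im < B) ∧ (-B ≤ z.im ∧ z.im < B)}

def firstQuadrantT : Set GaussianInt := {z : GaussianInt | 0 < z.re ∧ 0 < z.im}

open Finset

/-- The coordinates of `z = x·1 + y·(-1+i)` with respect to `E'`, listed as `(y, x)`. -/
def gaussianCoords' : GaussianInt ≃ ℤ × ℤ where
  toFun z := (z.im, z.re + z.im)
  invFun p := ⟨p.2 - p.1, p.1⟩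
  left_inv z := by ext <;> simp
  right_inv p := by ext <;> simp

theorem image_gaussianCoords'_gaussianBox'_inter_firstQuadrantT (B : ℤ) :
    gaussianCoords' '' (gaussianBox' B ∩ firstQuadrantT) =
      ↑{p ∈ Ioo 0 B ×ˢ Ioo 0 B | p.1 < p.2} := by
  ext ⟨y, x⟩
  simp only [Equiv.image_eq_preimage_symm, Set.mem_preimage, gaussianCoords',
    Equiv.coe_fn_symm_mk, gaussianBox', firstQuadrantT, Set.mem_inter_iff, Set.mem_ofPred_eq,
    coe_filter, mem_product, mem_Ioo]
  omega

theorem card_gaussianBox'_inter_firstQuadrantT (B : ℤ) :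
    Nat.card (gaussianBox' B ∩ firstQuadrantT : Set GaussianInt) = (B - 1).toNat.choose 2 := by
  rw [← Nat.card_image_equiv gaussianCoords',
    image_gaussianCoords'_gaussianBox'_inter_firstQuadrantT, Nat.card_coe_set_eq,
    Set.ncard_coe_finset, card_product_filter_lt, Int.card_Ioo, sub_zero]

theorem gaussian_first_quadrant_density_one_eighth_other_basis :
    (∀ B : ℕ, 2 ≤ B →
      Nat.card (gaussianBox' (B : ℤ) ∩ firstQuadrantT : Set GaussianInt)
        = (B - 1) * (B - 2) / 2) ∧
    Tendsto
      (fun B : ℕ =>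
        (Nat.card (gaussianBox' (B : ℤ) ∩ firstQuadrantT : Set GaussianInt) : ℝ) / (2 * B) ^ 2)
      atTop (𝓝 (1 / 8)) := by
  have hcard (B : ℕ) :
      Nat.card (gaussianBox' (B : ℤ) ∩ firstQuadrantT : Set GaussianInt) = (B - 1).choose 2 := by
    rw [card_gaussianBox'_inter_firstQuadrantT]
    congr 1
    omega
  refine ⟨fun B _ => by rw [hcard, Nat.choose_two_right, Nat.sub_sub], ?_⟩
  have hinv := tendsto_inv_atTop_nhds_zero_nat (𝕜 := ℝ)
  have hlim : Tendsto (fun B : ℕ => (1 - (B : ℝ)⁻¹) * (1 - 2 * (B : ℝ)⁻¹) / 8)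
      atTop (𝓝 (1 / 8)) := by
    simpa using (((tendsto_const_nhds (x := (1 : ℝ))).sub hinv).mul
      ((tendsto_const_nhds (x := (1 : ℝ))).sub (hinv.const_mul 2))).div_const (8 : ℝ)
  refine hlim.congr' ?_
  filter_upwards [eventually_ge_atTop 1] with B hB
  have hB0 : (B : ℝ) ≠ 0 := by positivity
  rw [hcard, Nat.cast_choose_two, Nat.cast_pred hB]
  field_simp
  ring
end

section
/- Let K be a number field of degree n with ring of integers O, E a Z-basis for O, S a finite set of rational primes, and N = ∏_{p∈S} p. For each p ∈ S let d_1^{(p)},…,d_{λ_p}^{(p)} be the inertia degrees of the primes above p and D_p their sum. Then for every positive integer q, |E_S ∩ O[qN,E]^m| = (2q)^{mn} ∏_{p∈S} ( p^{nm − mD_p} ∏_{j=1}^{λ_p} (p^{d_j^{(p)} m} − 1) ), where E_S is the set of m-tuples in O^m generating an ideal coprime to every p ∈ S. -/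
set_option maxHeartbeats 1000000
set_option synthInstance.maxHeartbeats 400000

open NumberField

/-- `x ∈ 𝒪[B, E]`: all coordinates of `x` with respect to the `ℤ`-basis `E` lie in `[-B, B)`. -/
def memBox {K : Type*} [Field K] [NumberField K] {n : ℕ}
    (E : Module.Basis (Fin n) ℤ (𝓞 K)) (B : ℤ) (x : 𝓞 K) : Prop :=
  ∀ i : Fin n, -B ≤ E.repr x i ∧ E.repr x i < B

/-!
A tuple generates an ideal coprime to `p` iff for each prime `𝔭 ∣ p` some entry lies outside `𝔭`,
a condition that only depends on the tuple modulo `N`. Reduction modulo `N` maps the box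
`𝒪[qN, E]` onto `𝒪/N𝒪`, every class being hit exactly `(2q)^n` times (`2q` times in each
coordinate), so the count is `(2q)^{mn}` times the number of such `m`-tuples in `𝒪/N𝒪`. By the
Chinese remainder theorem `𝒪/N𝒪` maps onto `∏_{𝔭 ∣ N} 𝒪/𝔭` with fibres of equal size
`N^n / ∏_p p^{D_p}`, and in each residue field `𝔽_{p^d}` exactly `p^{dm} - 1` tuples are nonzero.
-/

open Finset Function

theorem Int.Ico_filter_modEq_card_add_mul (a : ℤ) {r : ℤ} (hr : 0 < r) (k : ℕ) (v : ℤ) :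
    #{x ∈ Ico a (a + k * r) | x ≡ v [ZMOD r]} = k := by
  have h := Int.Ico_filter_modEq_card a (a + k * r) hr v
  have hshift : (((a + k * r : ℤ) : ℚ) - v) / r = ((a : ℚ) - v) / r + (k : ℤ) := by
    push_cast
    field_simp
    ring
  rw [hshift, Int.ceil_add_intCast] at h
  omega

theorem Nat.card_preimage_eq_mul_of_card_fiber {α β : Type*} [Finite α] [Finite β] {f : α → β}
    {c : ℕ} (hc : ∀ b, Nat.card {a // f a = b} = c) (s : Set β) :
    Nat.card (f ⁻¹' s) = c * Nat.card s := by
  classical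
  have := Fintype.ofFinite β
  have h := card_preimage_eq_sum_card_image_eq (f := f) (s := s.toFinset) fun b _ => Set.toFinite _
  rw [Set.coe_toFinset] at h
  rw [h, sum_congr rfl fun b _ => hc b, sum_const, smul_eq_mul, mul_comm,
    Nat.card_eq_card_toFinset]

theorem AddMonoidHom.card_preimage_mul_card {G H : Type*} [AddGroup G] [AddGroup H] [Finite G]
    {f : G →+ H} (hf : Surjective f) (s : Set H) :
    Nat.card (f ⁻¹' s) * Nat.card H = Nat.card G * Nat.card s := by
  have := Finite.of_surjective f hf
  have hc (h : H) : Nat.card {g // f g = h} = Nat.card f.ker :=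
    Nat.card_congr (fiberEquivKerOfSurjective hf h)
  rw [Nat.card_preimage_eq_mul_of_card_fiber hc, ← Nat.card_univ (α := G),
    ← Set.preimage_univ (f := f), Nat.card_preimage_eq_mul_of_card_fiber hc, Nat.card_univ]
  ring

theorem Nat.card_tuples_forall_exists_ne_zero {ι : Type*} [Fintype ι] {A : ι → Type*}
    [∀ i, Zero (A i)] [∀ i, Finite (A i)] (m : ℕ) :
    Nat.card {u : Fin m → ∀ i, A i // ∀ i, ∃ j, u j i ≠ 0} = ∏ i, (Nat.card (A i) ^ m - 1) := by
  classical
  let e : {u : Fin m → ∀ i, A i // ∀ i, ∃ j, u j i ≠ 0} ≃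
      ∀ i, {v : Fin m → A i // ∃ j, v j ≠ 0} :=
    (Equiv.subtypeEquiv (Equiv.piComm fun (_ : Fin m) i => A i) fun _ => Iff.rfl).trans
      (Equiv.subtypePiEquivPi (p := fun i (v : Fin m → A i) => ∃ j, v j ≠ 0))
  rw [Nat.card_congr e, Nat.card_pi]
  refine prod_congr rfl fun i _ => ?_
  have := Fintype.ofFinite (A i)
  simp only [← Function.ne_iff]
  simp [Nat.card_eq_fintype_card, Fintype.card_subtype_compl]

theorem Nat.pow_eq_pow_sub_mul_prod_pow {ι : Type*} (s : Finset ι) (d : ι → ℕ) (p m : ℕ)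
    {n : ℕ} (h : ∑ i ∈ s, d i ≤ n) :
    p ^ (n * m) = p ^ (n * m - m * ∑ i ∈ s, d i) * ∏ i ∈ s, p ^ (d i * m) := by
  rw [prod_pow_eq_pow_sum, ← sum_mul, ← pow_add, mul_comm (∑ i ∈ s, d i) m, Nat.sub_add_cancel]
  rw [mul_comm n m]
  exact Nat.mul_le_mul_left m h

theorem Module.Basis.mem_span_natCast_iff_dvd_repr {R ι : Type*} [CommRing R] [Fintype ι]
    (E : Basis ι ℤ R) (N : ℕ) (x : R) :
    x ∈ Ideal.span {(N : R)} ↔ ∀ i, (N : ℤ) ∣ E.repr x i := by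
  have hsmul (c : R) : c * N = (N : ℤ) • c := by rw [zsmul_eq_mul, mul_comm]; norm_cast
  rw [Ideal.mem_span_singleton']
  constructor
  · rintro ⟨c, rfl⟩ i
    rw [hsmul, map_zsmul]
    exact dvd_mul_right _ _
  · intro h
    refine ⟨E.equivFun.symm fun i => E.repr x i / N, E.equivFun.injective (funext fun i => ?_)⟩
    rw [hsmul, map_zsmul, LinearEquiv.apply_symm_apply, Pi.smul_apply, smul_eq_mul,
      Int.mul_ediv_cancel' (h i), Basis.equivFun_apply]

namespace Ideal

theorem sup_span_singleton_eq_top_iff {R ι : Type*} [CommRing R] (z : ι → R) (a : R) :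
    span (Set.range z) ⊔ span {a} = ⊤ ↔ ∀ 𝔭 : Ideal R, 𝔭.IsPrime → a ∈ 𝔭 → ∃ j, z j ∉ 𝔭 := by
  constructor
  · intro h 𝔭 h𝔭 ha
    by_contra! hz
    refine h𝔭.ne_top (top_le_iff.1 (h ▸ sup_le ?_ ((span_singleton_le_iff_mem _).2 ha)))
    exact span_le.2 (Set.range_subset_iff.2 hz)
  · intro h
    by_contra hne
    obtain ⟨𝔪, h𝔪, hle⟩ := exists_le_maximal _ hne
    obtain ⟨j, hj⟩ := h 𝔪 h𝔪.isPrime ((span_singleton_le_iff_mem _).1 (le_sup_right.trans hle))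
    exact hj (le_sup_left.trans hle (subset_span ⟨j, rfl⟩))

theorem pairwiseDisjoint_of_natCast_mem {R : Type*} [CommRing R] {S : Finset ℕ}
    (hS : ∀ p ∈ S, p.Prime) {P : ℕ → Finset (Ideal R)}
    (hP : ∀ p ∈ S, ∀ 𝔭 ∈ P p, 𝔭 ≠ ⊤ ∧ (p : R) ∈ 𝔭) : (S : Set ℕ).PairwiseDisjoint P := by
  intro p hp p' hp' hne
  refine disjoint_left.2 fun 𝔭 h h' => (hP p hp 𝔭 h).1 ?_
  obtain ⟨u, v, huv⟩ := ((Nat.coprime_primes (hS p hp) (hS p' hp')).2 hne).isCoprime.intCast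
    (R := R)
  push_cast at huv
  exact (eq_top_iff_one _).2
    (huv ▸ add_mem (mul_mem_left _ _ (hP p hp 𝔭 h).2) (mul_mem_left _ _ (hP p' hp' 𝔭 h').2))

theorem span_natCast_prod_le_of_mem_biUnion {R : Type*} [CommRing R] {S : Finset ℕ}
    {P : ℕ → Finset (Ideal R)} (hP : ∀ p ∈ S, ∀ 𝔭 ∈ P p, (p : R) ∈ 𝔭) {𝔭 : Ideal R}
    (h𝔭 : 𝔭 ∈ S.biUnion P) : span {((∏ p ∈ S, p : ℕ) : R)} ≤ 𝔭 := by
  obtain ⟨p, hp, h𝔭⟩ := mem_biUnion.1 h𝔭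
  exact (span_singleton_le_iff_mem _).2
    (mem_of_dvd _ (Nat.cast_dvd_cast (dvd_prod_of_mem id hp)) (hP p hp 𝔭 h𝔭))

theorem forall_sup_span_eq_top_iff {R ι : Type*} [CommRing R] (z : ι → R) {S : Finset ℕ}
    {P : ℕ → Finset (Ideal R)} (hP : ∀ p ∈ S, ∀ 𝔭 : Ideal R, 𝔭 ∈ P p ↔ 𝔭.IsPrime ∧ (p : R) ∈ 𝔭) :
    (∀ p ∈ S, span (Set.range z) ⊔ span {(p : R)} = ⊤) ↔ ∀ 𝔭 ∈ S.biUnion P, ∃ j, z j ∉ 𝔭 := by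
  simp only [sup_span_singleton_eq_top_iff, mem_biUnion, forall_exists_index, and_imp]
  refine ⟨fun h 𝔭 p hp h𝔭 => h p hp 𝔭 ((hP p hp 𝔭).1 h𝔭).1 ((hP p hp 𝔭).1 h𝔭).2,
    fun h p hp 𝔭 hprime hmem => h 𝔭 p hp ((hP p hp 𝔭).2 ⟨hprime, hmem⟩)⟩

section Quotient

variable {R : Type*} [CommRing R] {I : Ideal R} {T : Finset (Ideal R)}

theorem quotientInfToPiQuotient_comp_factor_surjective (hT : ∀ 𝔭 ∈ T, 𝔭.IsMaximal)
    (hI : I ≤ ⨅ 𝔭 : T, (𝔭 : Ideal R)) :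
    Surjective ((quotientInfToPiQuotient fun 𝔭 : T => (𝔭 : Ideal R)).comp
      (Quotient.factor hI)) := by
  have hcop : Pairwise (IsCoprime on fun 𝔭 : T => (𝔭 : Ideal R)) := fun 𝔭 𝔮 hne => by
    have := hT 𝔭 𝔭.2
    have := hT 𝔮 𝔮.2
    exact isCoprime_of_isMaximal (Subtype.coe_injective.ne hne)
  rw [RingHom.coe_comp]
  exact (quotientInfToPiQuotient_surj hcop).comp (Quotient.factor_surjective hI)

variable [Finite (R ⧸ I)]

theorem prod_card_quotient_le (hT : ∀ 𝔭 ∈ T, 𝔭.IsMaximal) (hI : ∀ 𝔭 ∈ T, I ≤ 𝔭) :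
    ∏ 𝔭 ∈ T, Nat.card (R ⧸ 𝔭) ≤ Nat.card (R ⧸ I) := by
  have hle : I ≤ ⨅ 𝔭 : T, (𝔭 : Ideal R) := le_iInf fun 𝔭 => hI 𝔭 𝔭.2
  rw [← prod_coe_sort, ← Nat.card_pi]
  exact Nat.card_le_card_of_surjective _ (quotientInfToPiQuotient_comp_factor_surjective hT hle)

theorem card_tuples_forall_exists_notMem_mul (hT : ∀ 𝔭 ∈ T, 𝔭.IsMaximal)
    (hI : ∀ 𝔭 ∈ T, I ≤ 𝔭) (m : ℕ) :
    Nat.card {w : Fin m → R ⧸ I // ∀ 𝔭 ∈ T, ∃ j, w j ∉ 𝔭.map (Quotient.mk I)} *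
        ∏ 𝔭 ∈ T, Nat.card (R ⧸ 𝔭) ^ m =
      Nat.card (R ⧸ I) ^ m * ∏ 𝔭 ∈ T, (Nat.card (R ⧸ 𝔭) ^ m - 1) := by
  have hle : I ≤ ⨅ 𝔭 : T, (𝔭 : Ideal R) := le_iInf fun 𝔭 => hI 𝔭 𝔭.2
  set φ := (quotientInfToPiQuotient fun 𝔭 : T => (𝔭 : Ideal R)).comp (Quotient.factor hle)
  have hφ : Surjective (φ.toAddMonoidHom.compLeft (Fin m)) :=
    (quotientInfToPiQuotient_comp_factor_surjective hT hle).comp_left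
  have (𝔭 : T) : Finite (R ⧸ (𝔭 : Ideal R)) :=
    Finite.of_surjective _ (Quotient.factor_surjective (hI 𝔭 𝔭.2))
  have hmem (𝔭 : T) (x : R ⧸ I) : x ∈ (𝔭 : Ideal R).map (Quotient.mk I) ↔ φ x 𝔭 = 0 := by
    obtain ⟨x, rfl⟩ := Quotient.mk_surjective x
    exact (mem_quotient_iff_mem (hI 𝔭 𝔭.2)).trans Quotient.eq_zero_iff_mem.symm
  let U : Set (Fin m → ∀ 𝔭 : T, R ⧸ (𝔭 : Ideal R)) := {u | ∀ 𝔭, ∃ j, u j 𝔭 ≠ 0}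
  have hU : Nat.card {w : Fin m → R ⧸ I // ∀ 𝔭 ∈ T, ∃ j, w j ∉ 𝔭.map (Quotient.mk I)} =
      Nat.card (φ.toAddMonoidHom.compLeft (Fin m) ⁻¹' U) := by
    refine Nat.card_congr (Equiv.subtypeEquivRight fun w => ?_)
    change _ ↔ ∀ 𝔭 : T, ∃ j, φ (w j) 𝔭 ≠ 0
    rw [Subtype.forall]
    exact forall₂_congr fun 𝔭 h𝔭 => exists_congr fun j => not_congr (hmem ⟨𝔭, h𝔭⟩ (w j))
  have hcard := AddMonoidHom.card_preimage_mul_card hφ U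
  rw [Nat.card_fun, Nat.card_fun, Nat.card_pi, Nat.card_fin] at hcard
  rw [hU, ← prod_coe_sort T, ← prod_coe_sort T, prod_pow, hcard]
  exact congrArg _ (Nat.card_tuples_forall_exists_ne_zero (A := fun 𝔭 : T => R ⧸ (𝔭 : Ideal R)) m)

end Quotient

end Ideal

section NumberField

variable {K : Type*} [Field K] [NumberField K]

theorem natCard_quotient_eq_absNorm (I : Ideal (𝓞 K)) : Nat.card (𝓞 K ⧸ I) = Ideal.absNorm I :=
  ((Ideal.absNorm_apply I).trans (Submodule.cardQuot_apply I)).symm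

theorem isMaximal_of_natCast_mem {𝔭 : Ideal (𝓞 K)} (h𝔭 : 𝔭.IsPrime) {p : ℕ} (hp : p ≠ 0)
    (h : (p : 𝓞 K) ∈ 𝔭) : 𝔭.IsMaximal :=
  h𝔭.isMaximal fun hbot => hp (by simpa [hbot] using h)

theorem sum_le_finrank_of_absNorm_eq_pow {p : ℕ} (hp : p.Prime) {Pp : Finset (Ideal (𝓞 K))}
    (hPp : ∀ 𝔭 ∈ Pp, 𝔭.IsMaximal ∧ (p : 𝓞 K) ∈ 𝔭) {d : Ideal (𝓞 K) → ℕ}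
    (hd : ∀ 𝔭 ∈ Pp, Ideal.absNorm 𝔭 = p ^ d 𝔭) :
    ∑ 𝔭 ∈ Pp, d 𝔭 ≤ Module.finrank ℤ (𝓞 K) := by
  have := Ideal.finiteQuotientOfFreeOfNeBot (Ideal.span {(p : 𝓞 K)}) (by simpa using hp.ne_zero)
  have h := Ideal.prod_card_quotient_le (fun 𝔭 h𝔭 => (hPp 𝔭 h𝔭).1)
    fun 𝔭 h𝔭 => (Ideal.span_singleton_le_iff_mem _).2 (hPp 𝔭 h𝔭).2
  simp only [natCard_quotient_eq_absNorm, Ideal.absNorm_span_natCast] at h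
  rwa [prod_congr rfl hd, prod_pow_eq_pow_sum, Nat.pow_le_pow_iff_right hp.one_lt] at h

theorem card_coprime_tuples_quotient (m : ℕ) {S : Finset ℕ} (hS : ∀ p ∈ S, p.Prime)
    {P : ℕ → Finset (Ideal (𝓞 K))} (hP : ∀ p ∈ S, ∀ 𝔭 ∈ P p, 𝔭.IsMaximal ∧ (p : 𝓞 K) ∈ 𝔭)
    {d : Ideal (𝓞 K) → ℕ} (hd : ∀ p ∈ S, ∀ 𝔭 ∈ P p, Ideal.absNorm 𝔭 = p ^ d 𝔭) :
    Nat.card {w : Fin m → 𝓞 K ⧸ Ideal.span {((∏ p ∈ S, p : ℕ) : 𝓞 K)} //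
        ∀ 𝔭 ∈ S.biUnion P, ∃ j, w j ∉ 𝔭.map (Ideal.Quotient.mk _)} =
      ∏ p ∈ S, (p ^ (Module.finrank ℤ (𝓞 K) * m - m * ∑ 𝔭 ∈ P p, d 𝔭) *
        ∏ 𝔭 ∈ P p, (p ^ (d 𝔭 * m) - 1)) := by
  classical
  have hdisj := Ideal.pairwiseDisjoint_of_natCast_mem hS fun p hp 𝔭 h𝔭 =>
    ⟨(hP p hp 𝔭 h𝔭).1.ne_top, (hP p hp 𝔭 h𝔭).2⟩
  have hprod (f : ℕ → ℕ) :
      ∏ 𝔭 ∈ S.biUnion P, f (Nat.card (𝓞 K ⧸ 𝔭)) = ∏ p ∈ S, ∏ 𝔭 ∈ P p, f (p ^ d 𝔭) := by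
    rw [prod_biUnion hdisj]
    refine prod_congr rfl fun p hp => prod_congr rfl fun 𝔭 h𝔭 => ?_
    rw [natCard_quotient_eq_absNorm, hd p hp 𝔭 h𝔭]
  have hmax (𝔭) (h𝔭 : 𝔭 ∈ S.biUnion P) : 𝔭.IsMaximal := by
    obtain ⟨p, hp, h𝔭⟩ := mem_biUnion.1 h𝔭
    exact (hP p hp 𝔭 h𝔭).1
  have := Ideal.finiteQuotientOfFreeOfNeBot (Ideal.span {((∏ p ∈ S, p : ℕ) : 𝓞 K)})
    (by simpa [prod_eq_zero_iff] using fun p hp => (hS p hp).ne_zero)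
  have hcount := Ideal.card_tuples_forall_exists_notMem_mul hmax
    (fun 𝔭 => Ideal.span_natCast_prod_le_of_mem_biUnion fun p hp 𝔭 h𝔭 => (hP p hp 𝔭 h𝔭).2) m
  have hpos : 0 < ∏ 𝔭 ∈ S.biUnion P, Nat.card (𝓞 K ⧸ 𝔭) ^ m := by
    rw [hprod (· ^ m)]
    exact prod_pos fun p hp => prod_pos fun _ _ => pow_pos (pow_pos (hS p hp).pos _) _
  refine Nat.eq_of_mul_eq_mul_right hpos ?_
  rw [hcount, natCard_quotient_eq_absNorm, Ideal.absNorm_span_natCast, hprod (· ^ m - 1),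
    hprod (· ^ m), ← pow_mul, ← prod_pow, prod_congr rfl fun p hp =>
      Nat.pow_eq_pow_sub_mul_prod_pow (P p) d p m
        (sum_le_finrank_of_absNorm_eq_pow (hS p hp) (hP p hp) (hd p hp))]
  simp only [← pow_mul]
  rw [← prod_mul_distrib, ← prod_mul_distrib]
  exact prod_congr rfl fun _ _ => by ring

variable {n : ℕ} (E : Module.Basis (Fin n) ℤ (𝓞 K))

theorem finite_setOf_memBox (B : ℤ) : {a | memBox E B a}.Finite := by
  refine ((Set.Finite.pi fun _ : Fin n => Set.finite_Ico (-B) B).preimage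
    E.equivFun.injective.injOn).subset fun a ha => ?_
  simpa [memBox] using ha

theorem card_memBox_fiber {N : ℕ} (hN : N ≠ 0) (q : ℕ) (x : 𝓞 K ⧸ Ideal.span {(N : 𝓞 K)}) :
    Nat.card {a // memBox E (q * N) a ∧ Ideal.Quotient.mk _ a = x} = (2 * q) ^ n := by
  obtain ⟨a₀, rfl⟩ := Ideal.Quotient.mk_surjective x
  let box (i : Fin n) : Finset ℤ :=
    {t ∈ Ico (-(q * N : ℤ)) (q * N) | t ≡ E.repr a₀ i [ZMOD N]}
  have hbox (a : 𝓞 K) : memBox E (q * N) a ∧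
      Ideal.Quotient.mk (Ideal.span {(N : 𝓞 K)}) a = Ideal.Quotient.mk _ a₀ ↔
      ∀ i, E.equivFun a i ∈ box i := by
    simp only [box, memBox, Ideal.Quotient.eq, E.mem_span_natCast_iff_dvd_repr, map_sub, mem_filter,
      mem_Ico, Module.Basis.equivFun_apply, Int.modEq_iff_dvd, ← forall_and]
    exact forall_congr' fun i => and_congr_right' dvd_sub_comm
  rw [Nat.card_congr ((Equiv.subtypeEquiv E.equivFun.toEquiv hbox).trans Equiv.subtypePiEquivPi),
    Nat.card_pi]
  have hcard (i : Fin n) : #(box i) = 2 * q := by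
    have := Int.Ico_filter_modEq_card_add_mul (-(q * N : ℤ)) (r := N) (by positivity) (2 * q)
      (E.repr a₀ i)
    rwa [show -(q * N : ℤ) + (2 * q : ℕ) * N = q * N by push_cast; ring] at this
  simp [hcard]

theorem card_memBox_tuples {N : ℕ} (hN : N ≠ 0) (q m : ℕ)
    (s : Set (Fin m → 𝓞 K ⧸ Ideal.span {(N : 𝓞 K)})) :
    Nat.card {z : Fin m → 𝓞 K |
        (∀ j, memBox E (q * N) (z j)) ∧ (fun j => Ideal.Quotient.mk _ (z j)) ∈ s}
      = (2 * q) ^ (m * n) * Nat.card s := by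
  have := Ideal.finiteQuotientOfFreeOfNeBot (Ideal.span {(N : 𝓞 K)}) (by simpa using hN)
  have : Finite {a // memBox E (q * N) a} := (finite_setOf_memBox E _).to_subtype
  let f (u : Fin m → {a // memBox E (q * N) a}) (j : Fin m) :
      𝓞 K ⧸ Ideal.span {(N : 𝓞 K)} := Ideal.Quotient.mk _ (u j).1
  have hfiber (w : Fin m → 𝓞 K ⧸ Ideal.span {(N : 𝓞 K)}) :
      Nat.card {u // f u = w} = (2 * q) ^ (m * n) := by
    let e : {u // f u = w} ≃
        ∀ j, {a : {a // memBox E (q * N) a} // Ideal.Quotient.mk _ a.1 = w j} :=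
      (Equiv.subtypeEquivRight fun u => funext_iff).trans (Equiv.subtypePiEquivPi
        (p := fun j (a : {a // memBox E (q * N) a}) => Ideal.Quotient.mk _ a.1 = w j))
    have hj (j : Fin m) :
        Nat.card {a : {a // memBox E (q * N) a} // Ideal.Quotient.mk _ a.1 = w j} = (2 * q) ^ n :=
      (Nat.card_congr (Equiv.subtypeSubtypeEquivSubtypeInter _ _)).trans
        (card_memBox_fiber E hN q (w j))
    rw [Nat.card_congr e, Nat.card_pi]
    simp [hj, pow_mul']
  rw [← Nat.card_preimage_eq_mul_of_card_fiber hfiber]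
  exact Nat.card_congr ((Equiv.subtypeSubtypeEquivSubtypeInter _ _).symm.trans
    (Equiv.subtypeEquiv (Equiv.subtypePiEquivPi (p := fun _ a => memBox E (q * N) a))
      fun _ => Iff.rfl))

end NumberField

theorem card_coprime_tuples_in_box_general
    (K : Type*) [Field K] [NumberField K] (n m : ℕ)
    (E : Module.Basis (Fin n) ℤ (𝓞 K)) (S : Finset ℕ) (hS : ∀ p ∈ S, Nat.Prime p)
    (N : ℕ) (hN : N = ∏ p ∈ S, p)
    (P : ℕ → Finset (Ideal (𝓞 K)))
    (hP : ∀ p ∈ S, ∀ 𝔭 : Ideal (𝓞 K), 𝔭 ∈ P p ↔ 𝔭.IsPrime ∧ (p : 𝓞 K) ∈ 𝔭)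
    (d : Ideal (𝓞 K) → ℕ)
    (hd : ∀ p ∈ S, ∀ 𝔭 ∈ P p, Ideal.absNorm 𝔭 = p ^ d 𝔭)
    (D : ℕ → ℕ) (hD : ∀ p ∈ S, D p = ∑ 𝔭 ∈ P p, d 𝔭)
    (q : ℕ) :
    Nat.card {z : Fin m → 𝓞 K |
        (∀ j, memBox E ((q : ℤ) * (N : ℤ)) (z j)) ∧
        ∀ p ∈ S, Ideal.span (Set.range z) ⊔ Ideal.span {(p : 𝓞 K)} = ⊤}
      = (2 * q) ^ (m * n) *
          ∏ p ∈ S, (p ^ (n * m - m * D p) * ∏ 𝔭 ∈ P p, (p ^ (d 𝔭 * m) - 1)) := by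
  subst hN
  have hmax (p) (hp : p ∈ S) (𝔭) (h𝔭 : 𝔭 ∈ P p) : 𝔭.IsMaximal ∧ (p : 𝓞 K) ∈ 𝔭 := by
    obtain ⟨hprime, hmem⟩ := (hP p hp 𝔭).1 h𝔭
    exact ⟨isMaximal_of_natCast_mem hprime (hS p hp).ne_zero hmem, hmem⟩
  have hle (𝔭) (h𝔭 : 𝔭 ∈ S.biUnion P) : Ideal.span {((∏ p ∈ S, p : ℕ) : 𝓞 K)} ≤ 𝔭 :=
    Ideal.span_natCast_prod_le_of_mem_biUnion (fun p hp 𝔭 h𝔭 => (hmax p hp 𝔭 h𝔭).2) h𝔭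
  have hcoprime (z : Fin m → 𝓞 K) :
      (∀ p ∈ S, Ideal.span (Set.range z) ⊔ Ideal.span {(p : 𝓞 K)} = ⊤) ↔
        (fun j => Ideal.Quotient.mk _ (z j)) ∈
          {w | ∀ 𝔭 ∈ S.biUnion P, ∃ j, w j ∉ 𝔭.map (Ideal.Quotient.mk _)} :=
    (Ideal.forall_sup_span_eq_top_iff z hP).trans <| forall₂_congr fun 𝔭 h𝔭 =>
      exists_congr fun j => not_congr (Ideal.mem_quotient_iff_mem (hle 𝔭 h𝔭)).symm
  simp_rw [hcoprime]
  rw [card_memBox_tuples E (prod_ne_zero_iff.2 fun p hp => (hS p hp).ne_zero), Set.coe_ofPred,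
    card_coprime_tuples_quotient m hS hmax hd, Module.finrank_eq_card_basis E, Fintype.card_fin]
  exact congrArg _ (prod_congr rfl fun p hp => by rw [hD p hp])

theorem card_coprime_tuples_in_box
    (K : Type*) [Field K] [NumberField K] (n m : ℕ) (hn : Module.finrank ℚ K = n)
    (E : Module.Basis (Fin n) ℤ (𝓞 K)) (S : Finset ℕ) (hS : ∀ p ∈ S, Nat.Prime p)
    (N : ℕ) (hN : N = ∏ p ∈ S, p)
    (P : ℕ → Finset (Ideal (𝓞 K)))
    (hP : ∀ p ∈ S, ∀ 𝔭 : Ideal (𝓞 K), 𝔭 ∈ P p ↔ 𝔭.IsPrime ∧ (p : 𝓞 K) ∈ 𝔭)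
    (d : Ideal (𝓞 K) → ℕ)
    (hd : ∀ p ∈ S, ∀ 𝔭 ∈ P p, Ideal.absNorm 𝔭 = p ^ d 𝔭)
    (D : ℕ → ℕ) (hD : ∀ p ∈ S, D p = ∑ 𝔭 ∈ P p, d 𝔭)
    (q : ℕ) (hq : 0 < q) :
    Nat.card {z : Fin m → 𝓞 K |
        (∀ j, memBox E ((q : ℤ) * (N : ℤ)) (z j)) ∧
        ∀ p ∈ S, Ideal.span (Set.range z) ⊔ Ideal.span {(p : 𝓞 K)} = ⊤}
      = (2 * q) ^ (m * n) *
          ∏ p ∈ S, (p ^ (n * m - m * D p) * ∏ 𝔭 ∈ P p, (p ^ (d 𝔭 * m) - 1)) :=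
  card_coprime_tuples_in_box_general K n m E S hS N hN P hP d hd D hD q
end

section
/- Let O be the ring of integers of a number field K of degree n, embedded into R^n via the canonical (Minkowski) embedding τ, and let I be a nonzero ideal of O. Then the first successive minimum of the lattice τ(I) ⊆ R^n is at least N(I)^{1/n}, where N(I) is the absolute norm of I. -/
/-!
Since `x ∈ I`, the principal ideal `(x)` is contained in `I`, so `N(I)` divides
`N((x)) = |N_{K/ℚ}(x)| = ∏_w w(x)^{mult w}`. Each `w(x)` is at most the Euclidean length
`S` of `τ(x)`, and the multiplicities add up to `n`, so `N(I) ≤ S^n`.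
-/

open NumberField

theorem Real.le_sqrt_sum_sq {ι : Type*} (s : Finset ι) (f : ι → ℝ) {i : ι} (hi : i ∈ s) :
    f i ≤ √(∑ j ∈ s, f j ^ 2) :=
  (le_abs_self _).trans <|
    Real.abs_le_sqrt (Finset.single_le_sum (fun j _ ↦ sq_nonneg (f j)) hi)

theorem Ideal.absNorm_le_natAbs_norm_of_mem {S : Type*} [CommRing S] [IsDedekindDomain S]
    [Module.Free ℤ S] [Module.Finite ℤ S] {I : Ideal S} {x : S} (hx : x ∈ I) (hx0 : x ≠ 0) :
    Ideal.absNorm I ≤ (Algebra.norm ℤ x).natAbs :=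
  Nat.le_of_dvd (Int.natAbs_pos.mpr (Algebra.norm_ne_zero_iff.mpr hx0))
    (Int.natCast_dvd.mp (Ideal.absNorm_dvd_norm_of_mem hx))

namespace NumberField.InfinitePlace

variable {K : Type*} [Field K] [NumberField K]

theorem absNorm_le_prod_pow_mult {I : Ideal (𝓞 K)} {x : 𝓞 K} (hx : x ∈ I) (hx0 : x ≠ 0) :
    (Ideal.absNorm I : ℝ) ≤ ∏ w : InfinitePlace K, w (x : K) ^ w.mult := by
  have h := Nat.cast_le (α := ℝ) |>.mpr (Ideal.absNorm_le_natAbs_norm_of_mem hx hx0)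
  rw [Nat.cast_natAbs] at h
  rw [prod_eq_abs_norm, ← Algebra.coe_norm_int]
  exact_mod_cast h

theorem prod_pow_mult_le_pow_finrank {x : K} {S : ℝ} (hS : ∀ w : InfinitePlace K, w x ≤ S) :
    ∏ w : InfinitePlace K, w x ^ w.mult ≤ S ^ Module.finrank ℚ K :=
  calc ∏ w : InfinitePlace K, w x ^ w.mult
      ≤ ∏ w : InfinitePlace K, S ^ w.mult :=
        Finset.prod_le_prod (fun w _ ↦ pow_nonneg (AbsoluteValue.nonneg _ x) _)
          (fun w _ ↦ pow_le_pow_left₀ (AbsoluteValue.nonneg _ x) (hS w) _)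
    _ = S ^ Module.finrank ℚ K := by rw [Finset.prod_pow_eq_pow_sum, sum_mult_eq]

end NumberField.InfinitePlace

theorem minkowski_embedding_first_minimum_general
    (K : Type*) [Field K] [NumberField K] (n : ℕ) (hn : Module.finrank ℚ K = n)
    (I : Ideal (𝓞 K)) :
    ∀ x ∈ I, x ≠ 0 →
      (Ideal.absNorm I : ℝ) ^ ((n : ℝ)⁻¹) ≤
        Real.sqrt (∑ w : InfinitePlace K, (w (algebraMap (𝓞 K) K x)) ^ 2) := by
  subst hn
  intro x hx hx0
  rw [Real.rpow_inv_le_iff_of_pos (Nat.cast_nonneg _) (Real.sqrt_nonneg _)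
    (Nat.cast_pos.mpr Module.finrank_pos), Real.rpow_natCast]
  calc (Ideal.absNorm I : ℝ)
      ≤ ∏ w : InfinitePlace K, w (x : K) ^ w.mult := InfinitePlace.absNorm_le_prod_pow_mult hx hx0
    _ ≤ _ := InfinitePlace.prod_pow_mult_le_pow_finrank fun w ↦
        Real.le_sqrt_sum_sq _ (fun w : InfinitePlace K ↦ w (x : K)) (Finset.mem_univ w)

/-- The Euclidean norm of the Minkowski embedding of a nonzero element of an ideal `I`
(one coordinate for each real place, one `ℝ²`-block, i.e. one `|σ(x)|²` contribution,
for each conjugate pair of complex embeddings) is at least `N(I)^(1/n)`. -/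
theorem minkowski_embedding_first_minimum
    (K : Type*) [Field K] [NumberField K] (n : ℕ) (hn : Module.finrank ℚ K = n)
    (I : Ideal (𝓞 K)) (hI : I ≠ ⊥) :
    ∀ x ∈ I, x ≠ 0 →
      (Ideal.absNorm I : ℝ) ^ ((n : ℝ)⁻¹) ≤
        Real.sqrt (∑ w : InfinitePlace K, (w (algebraMap (𝓞 K) K x)) ^ 2) :=
  minkowski_embedding_first_minimum_general K n hn I
end
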